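/- If T is a 3-leaf root of a graph G, v is an internal node of T with no leaf child, and T has at least one leaf not in the subtree of v, then G is disconnected. Equivalently: if G is connected and T is a 3-leaf root of G rooted at an internal node, then every internal node of T has a leaf child. -/
import Mathlib


/-- In the tree `T` rooted at `r`, `y` is a child of `x`. -/
def IsChild {V : Type*} (T : SimpleGraph V) (r x y : V) : Prop :=
  T.Adj x y ∧ T.dist r y = T.dist r x + 1

/-- In the tree `T` rooted at `r`, `y` is a descendant of `x` (lies in the subtree of `x`). -/
def IsDesc {V : Type*} (T : SimpleGraph V) (r x y : V) : Prop :=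
  T.dist r y = T.dist r x + T.dist x y

namespace Stmt4Aux

open SimpleGraph

variable {V : Type*} {T : SimpleGraph V}

/-- From any walk one can get a walk to the `i`-th vertex of length at most `i`. -/
lemma exists_walk_getVert {u w : V} (p : T.Walk u w) (i : ℕ) :
    ∃ q : T.Walk u (p.getVert i), q.length ≤ i := by
  induction p generalizing i with
  | nil => exact ⟨SimpleGraph.Walk.nil, Nat.zero_le _⟩
  | cons h p ih =>
    cases i with
    | zero => exact ⟨SimpleGraph.Walk.nil, Nat.zero_le _⟩
    | succ i =>
      obtain ⟨q, hq⟩ := ih i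
      exact ⟨SimpleGraph.Walk.cons h q, by simpa using Nat.succ_le_succ hq⟩

lemma dist_getVert_le {u w : V} (p : T.Walk u w) (i : ℕ) :
    T.dist u (p.getVert i) ≤ i := by
  obtain ⟨q, hq⟩ := exists_walk_getVert p i
  exact le_trans (SimpleGraph.dist_le q) hq

/-- In a tree, adjacent vertices have distances to `r` differing by exactly one. -/
lemma adj_dist_dichotomy (hT : T.IsTree) (r : V) {x y : V} (h : T.Adj x y) :
    T.dist r y = T.dist r x + 1 ∨ T.dist r x = T.dist r y + 1 := by
  have hconn := hT.isConnected
  have hxy : T.dist x y = 1 := SimpleGraph.dist_eq_one_iff_adj.mpr h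
  have hyx : T.dist y x = 1 := SimpleGraph.dist_eq_one_iff_adj.mpr h.symm
  have h1 : T.dist r y ≤ T.dist r x + 1 := by
    have := hconn.dist_triangle (u := r) (v := x) (w := y); omega
  have h2 : T.dist r x ≤ T.dist r y + 1 := by
    have := hconn.dist_triangle (u := r) (v := y) (w := x); omega
  have hne : T.dist r x ≠ T.dist r y := by
    classical
    intro heq
    obtain ⟨py, hpy⟩ := (hconn r y).exists_walk_length_eq_dist
    have hpyp : py.IsPath := py.isPath_of_length_eq_dist hpy
    have hx : x ∉ py.support := by
      intro hx
      have d1 : T.dist r x ≤ (py.takeUntil x hx).length := SimpleGraph.dist_le _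
      have d2 : T.dist x y ≤ (py.dropUntil x hx).length := SimpleGraph.dist_le _
      have d3 : (py.takeUntil x hx).length + (py.dropUntil x hx).length = py.length := by
        rw [← SimpleGraph.Walk.length_append, SimpleGraph.Walk.take_spec]
      omega
    have hW : (py.concat h.symm).IsPath := by
      rw [← SimpleGraph.Walk.isPath_reverse_iff, SimpleGraph.Walk.reverse_concat]
      refine (hpyp.reverse).cons ?_
      simpa [SimpleGraph.Walk.support_reverse] using hx
    obtain ⟨px, hpx⟩ := (hconn r x).exists_walk_length_eq_dist
    have hpxp : px.IsPath := px.isPath_of_length_eq_dist hpx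
    obtain ⟨P, _, huniq⟩ := hT.existsUnique_path r x
    have heqw : py.concat h.symm = px := (huniq _ hW).trans (huniq _ hpxp).symm
    have : (py.concat h.symm).length = px.length := by rw [heqw]
    rw [SimpleGraph.Walk.length_concat] at this
    omega
  omega

/-- A child of a descendant of `v` is a descendant of `v`. -/
lemma desc_child (hT : T.IsTree) {r v x y : V}
    (hx : T.dist r x = T.dist r v + T.dist v x) (h : T.Adj x y)
    (hy : T.dist r y = T.dist r x + 1) :
    T.dist r y = T.dist r v + T.dist v y := by
  have hconn := hT.isConnected
  have hxy : T.dist x y = 1 := SimpleGraph.dist_eq_one_iff_adj.mpr h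
  have t1 : T.dist r y ≤ T.dist r v + T.dist v y :=
    hconn.dist_triangle (u := r) (v := v) (w := y)
  have t2 : T.dist v y ≤ T.dist v x + T.dist x y :=
    hconn.dist_triangle (u := v) (v := x) (w := y)
  omega

/-- The parent of a descendant of `v` distinct from `v` is a descendant of `v`. -/
lemma desc_parent (hT : T.IsTree) {r v x y : V}
    (hx : T.dist r x = T.dist r v + T.dist v x) (hxv : x ≠ v) (h : T.Adj x y)
    (hy : T.dist r x = T.dist r y + 1) :
    T.dist r y = T.dist r v + T.dist v y := by
  have hconn := hT.isConnected
  have hvx : 0 < T.dist v x := hconn.pos_dist_of_ne (Ne.symm hxv)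
  obtain ⟨p1, hp1⟩ := (hconn r v).exists_walk_length_eq_dist
  obtain ⟨p2, hp2⟩ := (hconn v x).exists_walk_length_eq_dist
  obtain ⟨p3, hp3⟩ := (hconn r y).exists_walk_length_eq_dist
  have hA : (p1.append p2).length = T.dist r x := by
    rw [SimpleGraph.Walk.length_append, hp1, hp2, hx]
  have hApath : (p1.append p2).IsPath := (p1.append p2).isPath_of_length_eq_dist hA
  have hB : (p3.concat h.symm).length = T.dist r x := by
    rw [SimpleGraph.Walk.length_concat, hp3]; omega
  have hBpath : (p3.concat h.symm).IsPath := (p3.concat h.symm).isPath_of_length_eq_dist hB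
  obtain ⟨P, _, huniq⟩ := hT.existsUnique_path r x
  have hAB : p1.append p2 = p3.concat h.symm := (huniq _ hApath).trans (huniq _ hBpath).symm
  have hgv : (p1.append p2).getVert (T.dist r y) = (p3.concat h.symm).getVert (T.dist r y) := by
    rw [hAB]
  have hBy : (p3.concat h.symm).getVert (T.dist r y) = y := by
    rw [SimpleGraph.Walk.concat_eq_append, SimpleGraph.Walk.getVert_append]
    rw [hp3]
    simp
  have hAy : (p1.append p2).getVert (T.dist r y) = p2.getVert (T.dist v x - 1) := by
    rw [SimpleGraph.Walk.getVert_append, hp1]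
    have h1 : ¬ (T.dist r y < T.dist r v) := by omega
    rw [if_neg h1]
    congr 1
    omega
  have hy2 : p2.getVert (T.dist v x - 1) = y := by rw [← hAy, hgv, hBy]
  have hd : T.dist v y ≤ T.dist v x - 1 := by
    have := dist_getVert_le p2 (T.dist v x - 1)
    rwa [hy2] at this
  have t1 : T.dist r y ≤ T.dist r v + T.dist v y :=
    hconn.dist_triangle (u := r) (v := v) (w := y)
  omega

/-- If an edge of the tree crosses the subtree boundary, its inner endpoint is `v`. -/
lemma crossing_eq (hT : T.IsTree) {r v x y : V}
    (hx : T.dist r x = T.dist r v + T.dist v x)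
    (hy : ¬ T.dist r y = T.dist r v + T.dist v y)
    (h : T.Adj x y) : x = v := by
  rcases adj_dist_dichotomy hT r h with hc | hc
  · exact absurd (desc_child hT hx h hc) hy
  · by_contra hxv
    exact hy (desc_parent hT hx hxv h hc)

/-- Any walk from a descendant of `v` to a non-descendant has length at least
`dist u v + dist v w`. -/
lemma walk_length_ge (hT : T.IsTree) {r v u w : V} (p : T.Walk u w) :
    T.dist r u = T.dist r v + T.dist v u →
    ¬ T.dist r w = T.dist r v + T.dist v w →
    T.dist u v + T.dist v w ≤ p.length := by
  have hconn := hT.isConnected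
  induction p with
  | nil => intro hu hw; exact absurd hu hw
  | @cons u b w h q ih =>
    intro hu hw
    have hub : T.dist u b = 1 := SimpleGraph.dist_eq_one_iff_adj.mpr h
    by_cases hb : T.dist r b = T.dist r v + T.dist v b
    · have hih := ih hb hw
      have t1 : T.dist u v ≤ T.dist u b + T.dist b v :=
        hconn.dist_triangle (u := u) (v := b) (w := v)
      simp only [SimpleGraph.Walk.length_cons]
      omega
    · have huv : u = v := crossing_eq hT hu hb h
      subst huv
      have t1 : T.dist u w ≤ T.dist u b + T.dist b w :=
        hconn.dist_triangle (u := u) (v := b) (w := w)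
      have t2 : T.dist b w ≤ q.length := SimpleGraph.dist_le q
      simp only [SimpleGraph.Walk.length_cons, SimpleGraph.dist_self]
      omega

lemma dist_ge (hT : T.IsTree) {r v u w : V}
    (hu : T.dist r u = T.dist r v + T.dist v u)
    (hw : ¬ T.dist r w = T.dist r v + T.dist v w) :
    T.dist u v + T.dist v w ≤ T.dist u w := by
  obtain ⟨p, hp⟩ := (hT.isConnected u w).exists_walk_length_eq_dist
  have := walk_length_ge hT p hu hw
  omega

end Stmt4Aux

open Stmt4Aux in
/-- Let `T` be a 3-leaf root of `G` rooted at `r` (the vertices of `G`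
are the leaves of `T`, i.e. the nodes without children, and adjacency in `G` holds iff
tree distance ≤ 3). If `v` is an internal node (it has a child) with no leaf child,
and there are leaves both inside and outside the subtree of `v`, then `G` is
disconnected. -/
theorem stmt4 {V : Type*} (T : SimpleGraph V) (hT : T.IsTree) (r : V)
    (G : SimpleGraph {x : V // ∀ z, ¬ IsChild T r x z})
    (hadj : ∀ u v : {x : V // ∀ z, ¬ IsChild T r x z},
      G.Adj u v ↔ u ≠ v ∧ T.dist u.1 v.1 ≤ 3)
    (v : V) (hvr : v ≠ r)
    (hvint : ∃ y, IsChild T r v y)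
    (hnoleafchild : ∀ y, IsChild T r v y → ∃ z, IsChild T r y z)
    (hin : ∃ a : {x : V // ∀ z, ¬ IsChild T r x z}, IsDesc T r v a.1)
    (hout : ∃ c : {x : V // ∀ z, ¬ IsChild T r x z}, ¬ IsDesc T r v c.1) :
    ¬ G.Connected := by
  intro hGconn
  have hconn := hT.isConnected
  obtain ⟨a, ha⟩ := hin
  obtain ⟨c, hc⟩ := hout
  -- find a crossing edge in G along a walk from a to c
  obtain ⟨p⟩ := hGconn a c
  have key : ∀ (x y : {x : V // ∀ z, ¬ IsChild T r x z}) (q : G.Walk x y),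
      IsDesc T r v x.1 → ¬ IsDesc T r v y.1 →
      ∃ u w : {x : V // ∀ z, ¬ IsChild T r x z},
        G.Adj u w ∧ IsDesc T r v u.1 ∧ ¬ IsDesc T r v w.1 := by
    intro x y q
    induction q with
    | nil => intro hx hy; exact absurd hx hy
    | @cons x b y h q ih =>
      intro hx hy
      by_cases hb : IsDesc T r v b.1
      · exact ih hb hy
      · exact ⟨x, b, h, hx, hb⟩
  obtain ⟨u, w, huw, hu, hw⟩ := key a c p ha hc
  have h3 : T.dist u.1 w.1 ≤ 3 := ((hadj u w).mp huw).2
  -- distance from u to v is at least 2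
  have huv2 : 2 ≤ T.dist u.1 v := by
    have hune : u.1 ≠ v := by
      intro h
      obtain ⟨y, hy⟩ := hvint
      exact u.2 y (h ▸ hy)
    have hpos : 0 < T.dist u.1 v := hconn.pos_dist_of_ne hune
    rcases Nat.lt_or_ge (T.dist u.1 v) 2 with h2 | h2
    · exfalso
      have h1 : T.dist u.1 v = 1 := by omega
      have hvu : T.dist v u.1 = 1 := by rw [SimpleGraph.dist_comm]; exact h1
      have hadjvu : T.Adj v u.1 := SimpleGraph.dist_eq_one_iff_adj.mp hvu
      have hchild : IsChild T r v u.1 := by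
        refine ⟨hadjvu, ?_⟩
        have := hu
        unfold IsDesc at this
        omega
      obtain ⟨z, hz⟩ := hnoleafchild u.1 hchild
      exact u.2 z hz
    · exact h2
  -- distance from v to w is at least 2
  have hvw2 : 2 ≤ T.dist v w.1 := by
    have hwne : w.1 ≠ v := by
      intro h
      apply hw
      unfold IsDesc
      rw [h, SimpleGraph.dist_self]
      omega
    have hpos : 0 < T.dist v w.1 := hconn.pos_dist_of_ne (Ne.symm hwne)
    rcases Nat.lt_or_ge (T.dist v w.1) 2 with h2 | h2
    · exfalso
      have h1 : T.dist v w.1 = 1 := by omega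
      have hadjvw : T.Adj v w.1 := SimpleGraph.dist_eq_one_iff_adj.mp h1
      rcases adj_dist_dichotomy hT r hadjvw with hcase | hcase
      · obtain ⟨z, hz⟩ := hnoleafchild w.1 ⟨hadjvw, hcase⟩
        exact w.2 z hz
      · exact w.2 v ⟨hadjvw.symm, hcase⟩
    · exact h2
  have h4 : T.dist u.1 v + T.dist v w.1 ≤ T.dist u.1 w.1 :=
    dist_ge hT hu hw
  omega
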